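/- Let μ and ν be probability measures on ℝ with finite first moments, let r and K₂ < K₁ be reals with r < K₁ and ν((r,∞)) = 0, and let π be a martingale coupling of μ and ν. Then μ((r,∞)) = 0, for every Borel set B ⊆ ℝ the American-put payoff satisfies A(π,B) ≤ K₁ − ∫ x dμ(x), and A(π,ℝ) = K₁ − ∫ x dμ(x); hence the supremum over all martingale couplings and Borel sets of the payoff equals K₁ − ∫ x dμ(x), and it is always optimal to exercise at time 1. -/

import Mathlib

open MeasureTheory Set

/-- The put price function `P_η(k) = ∫ (k-x)⁺ dη(x)`. -/
noncomputable def putPrice (η : Measure ℝ) (k : ℝ) : ℝ := ∫ x, max (k - x) 0 ∂η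

/-- `π` is a martingale coupling of `μ` and `ν`. -/
def IsMartingaleCoupling (μ ν : Measure ℝ) (π : Measure (ℝ × ℝ)) : Prop :=
  IsProbabilityMeasure π ∧ π.map Prod.fst = μ ∧ π.map Prod.snd = ν ∧
    ∀ B : Set ℝ, MeasurableSet B →
      ∫ p in B ×ˢ (Set.univ : Set ℝ), p.2 ∂π = ∫ x in B, x ∂μ

/-- The American-put payoff under coupling `π` and exercise set `B`. -/
noncomputable def amPayoff (K₁ K₂ : ℝ) (π : Measure (ℝ × ℝ)) (B : Set ℝ) : ℝ :=
  ∫ p, (B.indicator (fun x => max (K₁ - x) 0) p.1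
      + Bᶜ.indicator (fun _ => max (K₂ - p.2) 0) p.1) ∂π

/-!
Write `(X, Y)` for the coordinates under `π`. Both marginals live on `(-∞, K₁]`: `ν` since
`r < K₁`, and `μ` since `∫_{X > r} (X - Y) dπ = 0` by the martingale property while `X - Y > 0`
on `{X > r}`. There every put payoff is at most `K₁` minus the price, so the payoff of an exercise
set `B` is at most `K₁ - 𝔼[Z]` with `Z = X` on `{X ∈ B}` and `Z = Y` off it; the martingale
property gives `𝔼[Z] = 𝔼[X] = ∫ x dμ`, and exercising at once attains this bound.
-/

lemma ae_le_of_measure_Ioi_eq_zero {ν : Measure ℝ} {r : ℝ} (h : ν (Ioi r) = 0) :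
    ∀ᵐ y ∂ν, y ≤ r :=
  (measure_eq_zero_iff_ae_notMem.1 h).mono fun _ hy => not_lt.1 hy

lemma putPrice_eq_sub_integral {μ : Measure ℝ} [IsProbabilityMeasure μ] {K : ℝ}
    (hμ : Integrable (fun x => x) μ) (hK : ∀ᵐ x ∂μ, x ≤ K) :
    putPrice μ K = K - ∫ x, x ∂μ := by
  unfold putPrice
  rw [integral_congr_ae (hK.mono fun x hx => max_eq_left (sub_nonneg.2 hx)),
    integral_sub (integrable_const K) hμ, integral_const, probReal_univ, one_smul]

lemma amPayoff_univ {μ : Measure ℝ} {π : Measure (ℝ × ℝ)} (hπ : π.map Prod.fst = μ)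
    (K₁ K₂ : ℝ) : amPayoff K₁ K₂ π univ = putPrice μ K₁ := by
  simp only [amPayoff, indicator_univ, compl_univ, indicator_empty, add_zero, putPrice, ← hπ]
  exact (integral_map (f := fun x => max (K₁ - x) 0) measurable_fst.aemeasurable
    (by fun_prop)).symm

-- The right-hand side is `K₁` minus the price at the exercise time.
lemma amPayoff_integrand_le {K₁ K₂ : ℝ} {B : Set ℝ} {p : ℝ × ℝ} (hK : K₂ ≤ K₁)
    (h₁ : p.1 ≤ K₁) (h₂ : p.2 ≤ K₁) :
    B.indicator (fun x => max (K₁ - x) 0) p.1 + Bᶜ.indicator (fun _ => max (K₂ - p.2) 0) p.1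
      ≤ K₁ - p.1 + (Prod.fst ⁻¹' Bᶜ).indicator (fun q => q.1 - q.2) p := by
  by_cases hp : p.1 ∈ B
  · have hp' : p ∉ Prod.fst ⁻¹' Bᶜ := fun h => h hp
    simp only [indicator_of_mem hp, indicator_of_notMem (show p.1 ∉ Bᶜ from not_not_intro hp),
      indicator_of_notMem hp']
    rw [add_zero, add_zero, max_eq_left (sub_nonneg.2 h₁)]
  · have hp' : p ∈ Prod.fst ⁻¹' Bᶜ := hp
    simp only [indicator_of_notMem hp, indicator_of_mem (show p.1 ∈ Bᶜ from hp),
      indicator_of_mem hp', zero_add]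
    exact max_le (by linarith) (by linarith)

namespace IsMartingaleCoupling

variable {μ ν : Measure ℝ} {π : Measure (ℝ × ℝ)}

lemma isProbabilityMeasure_left (hπ : IsMartingaleCoupling μ ν π) : IsProbabilityMeasure μ := by
  have := hπ.1
  exact hπ.2.1 ▸ Measure.isProbabilityMeasure_map measurable_fst.aemeasurable

lemma integrable_fst (hπ : IsMartingaleCoupling μ ν π) (hμ : Integrable (fun x => x) μ) :
    Integrable (fun p : ℝ × ℝ => p.1) π := by
  rw [← hπ.2.1] at hμ
  exact (integrable_map_measure aestronglyMeasurable_id measurable_fst.aemeasurable).1 hμ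

lemma integrable_snd (hπ : IsMartingaleCoupling μ ν π) (hν : Integrable (fun y => y) ν) :
    Integrable (fun p : ℝ × ℝ => p.2) π := by
  rw [← hπ.2.2.1] at hν
  exact (integrable_map_measure aestronglyMeasurable_id measurable_snd.aemeasurable).1 hν

lemma integral_fst (hπ : IsMartingaleCoupling μ ν π) : ∫ p, p.1 ∂π = ∫ x, x ∂μ := by
  rw [← hπ.2.1, integral_map measurable_fst.aemeasurable (by fun_prop)]

lemma setIntegral_snd (hπ : IsMartingaleCoupling μ ν π) {B : Set ℝ} (hB : MeasurableSet B) :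
    ∫ p in Prod.fst ⁻¹' B, p.2 ∂π = ∫ p in Prod.fst ⁻¹' B, p.1 ∂π := by
  rw [← prod_univ, hπ.2.2.2 B hB, ← hπ.2.1,
    setIntegral_map hB (by fun_prop) measurable_fst.aemeasurable, prod_univ]

lemma setIntegral_fst_sub_snd (hπ : IsMartingaleCoupling μ ν π)
    (hμ : Integrable (fun x => x) μ) (hν : Integrable (fun y => y) ν)
    {B : Set ℝ} (hB : MeasurableSet B) :
    ∫ p in Prod.fst ⁻¹' B, (p.1 - p.2) ∂π = 0 := by
  rw [integral_sub (hπ.integrable_fst hμ).integrableOn (hπ.integrable_snd hν).integrableOn,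
    hπ.setIntegral_snd hB, sub_self]

lemma measure_Ioi_eq_zero (hπ : IsMartingaleCoupling μ ν π)
    (hμ : Integrable (fun x => x) μ) (hν : Integrable (fun y => y) ν)
    {r : ℝ} (hνr : ν (Ioi r) = 0) : μ (Ioi r) = 0 := by
  set S : Set (ℝ × ℝ) := Prod.fst ⁻¹' Ioi r
  have hS : MeasurableSet S := measurable_fst measurableSet_Ioi
  have hY : ∀ᵐ p ∂π, p.2 ≤ r :=
    ae_of_ae_map measurable_snd.aemeasurable (hπ.2.2.1 ▸ ae_le_of_measure_Ioi_eq_zero hνr)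
  have hpos : ∀ᵐ p ∂π.restrict S, 0 < p.1 - p.2 := by
    filter_upwards [ae_restrict_mem hS, ae_restrict_of_ae hY] with p (hp : r < p.1) hpY
    linarith
  have hzero : (fun p : ℝ × ℝ => p.1 - p.2) =ᵐ[π.restrict S] 0 :=
    (integral_eq_zero_iff_of_nonneg_ae (hpos.mono fun _ h => h.le)
      ((hπ.integrable_fst hμ).sub (hπ.integrable_snd hν)).integrableOn).1
      (hπ.setIntegral_fst_sub_snd hμ hν measurableSet_Ioi)
  have hS0 : π.restrict S = 0 := by
    refine ae_eq_bot.1 (Filter.eventually_false_iff_eq_bot.1 ?_)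
    filter_upwards [hpos, hzero] with p hp hp0
    exact hp.ne' hp0
  rw [← hπ.2.1, Measure.map_apply measurable_fst measurableSet_Ioi, ← Measure.restrict_eq_zero]
  exact hS0

lemma amPayoff_le (hπ : IsMartingaleCoupling μ ν π)
    (hμ : Integrable (fun x => x) μ) (hν : Integrable (fun y => y) ν)
    {K₁ K₂ : ℝ} (hK : K₂ ≤ K₁) (hνK : ν (Ioi K₁) = 0) {B : Set ℝ} (hB : MeasurableSet B) :
    amPayoff K₁ K₂ π B ≤ K₁ - ∫ x, x ∂μ := by
  have := hπ.1
  have hX : ∀ᵐ p ∂π, p.1 ≤ K₁ := ae_of_ae_map measurable_fst.aemeasurable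
    (hπ.2.1 ▸ ae_le_of_measure_Ioi_eq_zero (hπ.measure_Ioi_eq_zero hμ hν hνK))
  have hY : ∀ᵐ p ∂π, p.2 ≤ K₁ :=
    ae_of_ae_map measurable_snd.aemeasurable (hπ.2.2.1 ▸ ae_le_of_measure_Ioi_eq_zero hνK)
  have hBc : MeasurableSet (Prod.fst ⁻¹' Bᶜ : Set (ℝ × ℝ)) := measurable_fst hB.compl
  have hint : Integrable (fun p : ℝ × ℝ => p.1 - p.2) π :=
    (hπ.integrable_fst hμ).sub (hπ.integrable_snd hν)
  have hintK : Integrable (fun p : ℝ × ℝ => K₁ - p.1) π :=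
    (integrable_const K₁).sub (hπ.integrable_fst hμ)
  calc amPayoff K₁ K₂ π B
      ≤ ∫ p, (K₁ - p.1 + (Prod.fst ⁻¹' Bᶜ).indicator (fun q => q.1 - q.2) p) ∂π := by
        refine integral_mono_of_nonneg (Filter.Eventually.of_forall fun p => ?_)
          (hintK.add (hint.indicator hBc)) ?_
        · exact add_nonneg (indicator_nonneg (fun _ _ => le_max_right _ _) _)
            (indicator_nonneg (fun _ _ => le_max_right _ _) _)
        · filter_upwards [hX, hY] with p hp₁ hp₂
          exact amPayoff_integrand_le hK hp₁ hp₂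
    _ = K₁ - ∫ x, x ∂μ := by
        rw [integral_add hintK (hint.indicator hBc),
          integral_sub (integrable_const K₁) (hπ.integrable_fst hμ), integral_indicator hBc,
          hπ.setIntegral_fst_sub_snd hμ hν hB.compl, integral_const, probReal_univ, one_smul,
          hπ.integral_fst, add_zero]

end IsMartingaleCoupling

theorem immediate_exercise_optimal_general
    (μ ν : Measure ℝ)
    (hμint : Integrable (fun x => x) μ) (hνint : Integrable (fun y => y) ν)
    (r K₁ K₂ : ℝ) (hK : K₂ < K₁) (hr : r < K₁)
    (hν : ν (Set.Ioi r) = 0)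
    (π : Measure (ℝ × ℝ)) (hπ : IsMartingaleCoupling μ ν π) :
    μ (Set.Ioi r) = 0 ∧
    (∀ B : Set ℝ, MeasurableSet B → amPayoff K₁ K₂ π B ≤ K₁ - ∫ x, x ∂μ) ∧
    amPayoff K₁ K₂ π Set.univ = K₁ - ∫ x, x ∂μ ∧
    sSup { r' : ℝ | ∃ π' : Measure (ℝ × ℝ), ∃ B : Set ℝ,
        IsMartingaleCoupling μ ν π' ∧ MeasurableSet B ∧ r' = amPayoff K₁ K₂ π' B }
      = K₁ - ∫ x, x ∂μ := by
  have hνK : ν (Ioi K₁) = 0 := measure_mono_null (Ioi_subset_Ioi hr.le) hν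
  have hbound : ∀ π', IsMartingaleCoupling μ ν π' → ∀ B, MeasurableSet B →
      amPayoff K₁ K₂ π' B ≤ K₁ - ∫ x, x ∂μ :=
    fun π' hπ' B hB => hπ'.amPayoff_le hμint hνint hK.le hνK hB
  have hopt : amPayoff K₁ K₂ π univ = K₁ - ∫ x, x ∂μ := by
    have := hπ.isProbabilityMeasure_left
    rw [amPayoff_univ hπ.2.1, putPrice_eq_sub_integral hμint
      (ae_le_of_measure_Ioi_eq_zero (hπ.measure_Ioi_eq_zero hμint hνint hνK))]
  refine ⟨hπ.measure_Ioi_eq_zero hμint hνint hν, hbound π hπ, hopt, ?_⟩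
  refine IsGreatest.csSup_eq ⟨⟨π, univ, hπ, .univ, hopt.symm⟩, ?_⟩
  rintro _ ⟨π', B, hπ', hB, rfl⟩
  exact hbound π' hπ' B hB

/-- Case `K₁` above the support of `ν`: the underlying never exceeds `r < K₁`, immediate
exercise is optimal, and the highest price is `K₁ - ∫ x dμ`. -/
theorem immediate_exercise_optimal
    (μ ν : Measure ℝ) [IsProbabilityMeasure μ] [IsProbabilityMeasure ν]
    (hμint : Integrable (fun x => x) μ) (hνint : Integrable (fun y => y) ν)
    (r K₁ K₂ : ℝ) (hK : K₂ < K₁) (hr : r < K₁)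
    (hν : ν (Set.Ioi r) = 0)
    (π : Measure (ℝ × ℝ)) (hπ : IsMartingaleCoupling μ ν π) :
    μ (Set.Ioi r) = 0 ∧
    (∀ B : Set ℝ, MeasurableSet B → amPayoff K₁ K₂ π B ≤ K₁ - ∫ x, x ∂μ) ∧
    amPayoff K₁ K₂ π Set.univ = K₁ - ∫ x, x ∂μ ∧
    sSup { r' : ℝ | ∃ π' : Measure (ℝ × ℝ), ∃ B : Set ℝ,
        IsMartingaleCoupling μ ν π' ∧ MeasurableSet B ∧ r' = amPayoff K₁ K₂ π' B }
      = K₁ - ∫ x, x ∂μ :=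
  immediate_exercise_optimal_general μ ν hμint hνint r K₁ K₂ hK hr hν π hπ
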